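/- Let Π be a nonnegative N×N matrix with all row sums equal to 1, and let Υ be an N×N matrix with entries in [0,1] such that every final class of Π contains states m, n with Π_{mn} > 0 and Υ_{mn} < 1. Then the spectral abscissa of the Hadamard product Π ⊙ Υ is strictly less than 1; equivalently ζ(Π⊙Υ − I) < 0. -/

import Mathlib

open Matrix

/-- The spectral abscissa of a real square matrix. -/
noncomputable def specAbs {n : Type*} [Fintype n] [DecidableEq n]
    (A : Matrix n n ℝ) : ℝ :=
  sSup (Complex.re '' spectrum ℂ (A.map (algebraMap ℝ ℂ)))

variable {N : ℕ}

/-- Access relation of the directed graph of nonzero off-diagonal entries. -/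
def access (B : Matrix (Fin N) (Fin N) ℝ) : Fin N → Fin N → Prop :=
  Relation.ReflTransGen (fun i j => i ≠ j ∧ B i j ≠ 0)

/-- A class of `B` (strongly connected component of its directed graph). -/
def IsClass (B : Matrix (Fin N) (Fin N) ℝ) (γ : Set (Fin N)) : Prop :=
  ∃ m : Fin N, γ = {n' : Fin N | access B m n' ∧ access B n' m}

/-- Class `γ` has access to class `δ`. -/
def classAccess (B : Matrix (Fin N) (Fin N) ℝ) (γ δ : Set (Fin N)) : Prop :=
  ∃ m ∈ γ, ∃ n' ∈ δ, access B m n'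

/-- A final class: a class having access to no other class. -/
def IsFinalClass (B : Matrix (Fin N) (Fin N) ℝ) (γ : Set (Fin N)) : Prop :=
  IsClass B γ ∧ ∀ δ : Set (Fin N), IsClass B δ → δ ≠ γ → ¬ classAccess B γ δ

/-!
`B = P ⊙ U` is nonnegative with row sums at most one. From every state some final class of `P`
is accessible, and that class contains a row in which `B` loses mass; following the path in the
graph of `B` up to the first edge killed by `U` (whose row then loses mass too), every state
accesses a row of `B` with sum `< 1`. If `B v = μ v` with `‖μ‖ ≥ 1`, then at an index of maximal
`‖v i‖` the chain `‖v i‖ ≤ ∑ⱼ B i j ‖v j‖ ≤ ‖v i‖` is an equality, so the maximum spreads along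
the edges of `B` and every row it reaches has sum `1`: a contradiction. Hence every eigenvalue of
`B` lies in the open unit disc, and those of `B - 1` in the open left half-plane.
-/

def classOf (B : Matrix (Fin N) (Fin N) ℝ) (m : Fin N) : Set (Fin N) :=
  {n' | access B m n' ∧ access B n' m}

lemma classOf_eq_of_mem {B : Matrix (Fin N) (Fin N) ℝ} {m n : Fin N}
    (h : n ∈ classOf B m) : classOf B n = classOf B m := by
  obtain ⟨hmn, hnm⟩ := h
  ext x
  exact ⟨fun ⟨hnx, hxn⟩ => ⟨hmn.trans hnx, hxn.trans hnm⟩,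
    fun ⟨hmx, hxm⟩ => ⟨hnm.trans hmx, hxm.trans hmn⟩⟩

/-- A state `j` accessible from `i` with the fewest accessible states lies in a final class:
whatever `j` accesses has no more accessible states, hence accesses `j` back. -/
lemma exists_access_isFinalClass (B : Matrix (Fin N) (Fin N) ℝ) (i : Fin N) :
    ∃ j, access B i j ∧ IsFinalClass B (classOf B j) := by
  obtain ⟨j, hij, hmin⟩ := Set.exists_min_image {x | access B i x}
    (fun x => {y | access B x y}.ncard) (Set.toFinite _) ⟨i, .refl⟩
  refine ⟨j, hij, ⟨j, rfl⟩, ?_⟩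
  rintro δ ⟨k, rfl⟩ hne ⟨m, hm, n, hn, hmn⟩
  have hjn : access B j n := hm.1.trans hmn
  have hreach : {y | access B n y} = {y | access B j y} :=
    Set.eq_of_subset_of_ncard_le (fun y hy => hjn.trans hy) (hmin n (hij.trans hjn))
      (Set.toFinite _)
  have hnj : j ∈ {y | access B n y} := hreach ▸ Relation.ReflTransGen.refl
  exact hne ((classOf_eq_of_mem hn).symm.trans (classOf_eq_of_mem ⟨hjn, hnj⟩))

section Hadamard

variable {n : Type*} [Fintype n] {P U : Matrix n n ℝ}

lemma sum_hadamard_le_sum (hP : ∀ i j, 0 ≤ P i j) (hU : ∀ i j, U i j ≤ 1) (i : n) :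
    ∑ j, (P ⊙ U) i j ≤ ∑ j, P i j :=
  Finset.sum_le_sum fun j _ => mul_le_of_le_one_right (hP i j) (hU i j)

lemma sum_hadamard_lt_sum (hP : ∀ i j, 0 ≤ P i j) (hU : ∀ i j, U i j ≤ 1) {i j : n}
    (hPij : 0 < P i j) (hUij : U i j < 1) : ∑ j, (P ⊙ U) i j < ∑ j, P i j :=
  Finset.sum_lt_sum (fun l _ => mul_le_of_le_one_right (hP i l) (hU i l))
    ⟨j, Finset.mem_univ _, mul_lt_of_lt_one_right hPij hUij⟩

end Hadamard

lemma exists_access_hadamard_sum_lt_one {P U : Matrix (Fin N) (Fin N) ℝ}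
    (hP : ∀ i j, 0 ≤ P i j) (hrow : ∀ i, ∑ j, P i j = 1) (hU : ∀ i j, U i j ≤ 1)
    {i m : Fin N} (him : access P i m) (hm : ∑ j, (P ⊙ U) m j < 1) :
    ∃ r, access (P ⊙ U) i r ∧ ∑ j, (P ⊙ U) r j < 1 := by
  induction him using Relation.ReflTransGen.head_induction_on with
  | refl => exact ⟨m, .refl, hm⟩
  | @head a c hac _ ih =>
    obtain ⟨hne, hPac⟩ := hac
    by_cases hUac : U a c = 0
    · refine ⟨a, .refl, hrow a ▸ sum_hadamard_lt_sum hP hU ?_ (hUac ▸ one_pos)⟩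
      exact (hP a c).lt_of_ne' hPac
    · obtain ⟨r, hcr, hr⟩ := ih
      exact ⟨r, .head ⟨hne, mul_ne_zero hPac hUac⟩ hcr, hr⟩

section Spectrum

variable {n : Type*} [Fintype n] [DecidableEq n]

lemma exists_mulVec_eq_smul_of_mem_spectrum {K : Type*} [Field K] {A : Matrix n n K} {μ : K}
    (h : μ ∈ spectrum K A) : ∃ v ≠ 0, A *ᵥ v = μ • v := by
  rw [← Matrix.spectrum_toLin', ← Module.End.hasEigenvalue_iff_mem_spectrum] at h
  obtain ⟨v, hv⟩ := h.exists_hasEigenvector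
  exact ⟨v, hv.2, hv.apply_eq_smul⟩

lemma mem_spectrum_map_sub_one_iff {A : Matrix n n ℝ} {μ : ℂ} :
    μ ∈ spectrum ℂ ((A - 1).map (algebraMap ℝ ℂ)) ↔
      μ + 1 ∈ spectrum ℂ (A.map (algebraMap ℝ ℂ)) := by
  rw [spectrum.add_mem_iff, map_one, neg_add_eq_sub, Matrix.map_sub _ (map_sub _),
    Matrix.map_one _ (map_zero _) (map_one _)]

lemma specAbs_lt_of_forall_re_lt [Nonempty n] {A : Matrix n n ℝ} {c : ℝ}
    (h : ∀ μ ∈ spectrum ℂ (A.map (algebraMap ℝ ℂ)), μ.re < c) : specAbs A < c := by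
  have hne : (spectrum ℂ (A.map (algebraMap ℝ ℂ))).Nonempty :=
    spectrum.nonempty_of_isAlgClosed_of_finiteDimensional ℂ _
  obtain ⟨μ, hμ, hμre⟩ :=
    (hne.image Complex.re).csSup_mem ((Matrix.finite_spectrum _).image Complex.re)
  rw [specAbs, ← hμre]
  exact h μ hμ

end Spectrum

section Eigenvector

variable {n : Type*} [Fintype n] {B : Matrix n n ℝ} {v : n → ℂ} {μ : ℂ}

lemma norm_le_sum_mul_norm (hB : ∀ i j, 0 ≤ B i j) (hv : B.map (algebraMap ℝ ℂ) *ᵥ v = μ • v)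
    (hμ : 1 ≤ ‖μ‖) (i : n) : ‖v i‖ ≤ ∑ j, B i j * ‖v j‖ :=
  calc ‖v i‖ ≤ ‖μ‖ * ‖v i‖ := le_mul_of_one_le_left (norm_nonneg _) hμ
    _ = ‖∑ j, (B i j : ℂ) * v j‖ := by
      rw [← norm_mul, ← smul_eq_mul, ← Pi.smul_apply, ← hv]
      rfl
    _ ≤ ∑ j, B i j * ‖v j‖ := by
      refine (norm_sum_le _ _).trans_eq (Finset.sum_congr rfl fun j _ => ?_)
      rw [norm_mul, Complex.norm_of_nonneg (hB i j)]

lemma norm_eq_of_norm_max_of_ne_zero (hB : ∀ i j, 0 ≤ B i j) (hrow : ∀ i, ∑ j, B i j ≤ 1)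
    (hv : B.map (algebraMap ℝ ℂ) *ᵥ v = μ • v) (hμ : 1 ≤ ‖μ‖) {i j : n}
    (hi : ∀ k, ‖v k‖ ≤ ‖v i‖) (hij : B i j ≠ 0) : ‖v j‖ = ‖v i‖ := by
  have hsum : ∑ k, B i k * (‖v i‖ - ‖v k‖) = 0 := by
    refine le_antisymm ?_ (Finset.sum_nonneg fun k _ => mul_nonneg (hB i k) (sub_nonneg.2 (hi k)))
    calc ∑ k, B i k * (‖v i‖ - ‖v k‖) = (∑ k, B i k) * ‖v i‖ - ∑ k, B i k * ‖v k‖ := by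
          simp only [mul_sub, Finset.sum_sub_distrib, Finset.sum_mul]
      _ ≤ 1 * ‖v i‖ - ‖v i‖ := by
          gcongr
          · exact hrow i
          · exact norm_le_sum_mul_norm hB hv hμ i
      _ = 0 := by ring
  have hterm := (Finset.sum_eq_zero_iff_of_nonneg fun k _ =>
    mul_nonneg (hB i k) (sub_nonneg.2 (hi k))).1 hsum j (Finset.mem_univ _)
  linarith [(mul_eq_zero.1 hterm).resolve_left hij]

lemma one_le_sum_of_norm_max (hB : ∀ i j, 0 ≤ B i j) (hv : B.map (algebraMap ℝ ℂ) *ᵥ v = μ • v)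
    (hμ : 1 ≤ ‖μ‖) {i : n} (hi : ∀ k, ‖v k‖ ≤ ‖v i‖) (hvi : 0 < ‖v i‖) : 1 ≤ ∑ j, B i j := by
  refine le_of_mul_le_mul_right ?_ hvi
  calc 1 * ‖v i‖ ≤ ∑ j, B i j * ‖v j‖ := (one_mul _).trans_le (norm_le_sum_mul_norm hB hv hμ i)
    _ ≤ (∑ j, B i j) * ‖v i‖ := by
      rw [Finset.sum_mul]
      exact Finset.sum_le_sum fun j _ => mul_le_mul_of_nonneg_left (hi j) (hB i j)

end Eigenvector

lemma norm_eq_of_norm_max_of_access {B : Matrix (Fin N) (Fin N) ℝ} {v : Fin N → ℂ} {μ : ℂ}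
    (hB : ∀ i j, 0 ≤ B i j) (hrow : ∀ i, ∑ j, B i j ≤ 1)
    (hv : B.map (algebraMap ℝ ℂ) *ᵥ v = μ • v) (hμ : 1 ≤ ‖μ‖) {i r : Fin N}
    (hi : ∀ k, ‖v k‖ ≤ ‖v i‖) (hir : access B i r) : ‖v r‖ = ‖v i‖ := by
  induction hir with
  | refl => rfl
  | tail _ hab ih =>
    rw [← ih]
    exact norm_eq_of_norm_max_of_ne_zero hB hrow hv hμ (ih ▸ hi) hab.2

lemma norm_lt_one_of_mem_spectrum {B : Matrix (Fin N) (Fin N) ℝ}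
    (hB : ∀ i j, 0 ≤ B i j) (hrow : ∀ i, ∑ j, B i j ≤ 1)
    (hleak : ∀ i, ∃ r, access B i r ∧ ∑ j, B r j < 1) {μ : ℂ}
    (hμ : μ ∈ spectrum ℂ (B.map (algebraMap ℝ ℂ))) : ‖μ‖ < 1 := by
  by_contra! hμ1
  obtain ⟨v, hv0, hv⟩ := exists_mulVec_eq_smul_of_mem_spectrum hμ
  obtain ⟨k, hk⟩ := Function.ne_iff.1 hv0
  have : Nonempty (Fin N) := ⟨k⟩
  obtain ⟨i, -, hi⟩ := Finset.exists_max_image Finset.univ (‖v ·‖) Finset.univ_nonempty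
  replace hi : ∀ k, ‖v k‖ ≤ ‖v i‖ := fun k => hi k (Finset.mem_univ _)
  obtain ⟨r, hir, hr⟩ := hleak i
  have hvr : ‖v r‖ = ‖v i‖ := norm_eq_of_norm_max_of_access hB hrow hv hμ1 hi hir
  refine hr.not_ge (one_le_sum_of_norm_max hB hv hμ1 (hvr ▸ hi) ?_)
  exact hvr ▸ (norm_pos_iff.2 hk).trans_le (hi k)

/-- Let `Π` be a nonnegative stochastic matrix (row sums one) and `Υ` a matrix with
entries in `[0,1]` such that every final class of `Π` contains states `m, n` with
`Π_{mn} > 0` and `Υ_{mn} < 1`.  Then `ζ(Π ⊙ Υ) < 1`, equivalently `ζ(Π ⊙ Υ − I) < 0`. -/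
theorem hadamard_substochastic_specAbs_lt_one (hN : 0 < N)
    (P : Matrix (Fin N) (Fin N) ℝ)
    (hPnonneg : ∀ i j, 0 ≤ P i j)
    (hrow : ∀ i, ∑ j, P i j = 1)
    (U : Matrix (Fin N) (Fin N) ℝ)
    (hU : ∀ i j, U i j ∈ Set.Icc (0 : ℝ) 1)
    (hfinal : ∀ γ : Set (Fin N), IsFinalClass P γ →
      ∃ m ∈ γ, ∃ n' ∈ γ, 0 < P m n' ∧ U m n' < 1) :
    specAbs (P ⊙ U) < 1 ∧ specAbs (P ⊙ U - 1) < 0 := by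
  have hU1 : ∀ i j, U i j ≤ 1 := fun i j => (hU i j).2
  have hB : ∀ i j, 0 ≤ (P ⊙ U) i j := fun i j => mul_nonneg (hPnonneg i j) (hU i j).1
  have hrowB : ∀ i, ∑ j, (P ⊙ U) i j ≤ 1 := fun i =>
    hrow i ▸ sum_hadamard_le_sum hPnonneg hU1 i
  have hleak : ∀ i, ∃ r, access (P ⊙ U) i r ∧ ∑ j, (P ⊙ U) r j < 1 := by
    intro i
    obtain ⟨j, hij, hfin⟩ := exists_access_isFinalClass P i
    obtain ⟨m, hm, n', -, hPmn, hUmn⟩ := hfinal _ hfin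
    exact exists_access_hadamard_sum_lt_one hPnonneg hrow hU1 (hij.trans hm.1)
      (hrow m ▸ sum_hadamard_lt_sum hPnonneg hU1 hPmn hUmn)
  have hre : ∀ μ ∈ spectrum ℂ ((P ⊙ U).map (algebraMap ℝ ℂ)), μ.re < 1 := fun μ hμ =>
    (Complex.re_le_norm μ).trans_lt (norm_lt_one_of_mem_spectrum hB hrowB hleak hμ)
  have : Nonempty (Fin N) := ⟨⟨0, hN⟩⟩
  refine ⟨specAbs_lt_of_forall_re_lt hre, specAbs_lt_of_forall_re_lt fun μ hμ => ?_⟩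
  simpa using hre _ (mem_spectrum_map_sub_one_iff.1 hμ)
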